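/- arXiv:2501.18732 — 3 statements merged into one kernel-verified Lean document; each statement's English description precedes it below -/
import Mathlib

section
/- Let C : K → S → ℝ and W : K → S → ℝ satisfy C k s ≥ 0 and W k s ≥ 0 for all k, s. Let (x*, p*) be feasible for DA(C,W). Suppose (x̂, q̂) ∈ (Fin n → ℝ) × (K → ℝ) satisfies (x̂, q̂) ∈ Y, 0 ≤ q̂ k ≤ Σ_{s∈S} p* k s for all k ∈ K, and f0(x̂) < f0(x*). Then there exists p̂ : K → S → ℝ such that (x̂, p̂) is feasible for DA(C,W) and f0(x̂) + Σ_{k∈K} Σ_{s∈S} C k s * p̂ k s < f0(x*) + Σ_{k∈K} Σ_{s∈S} C k s * p* k s, i.e., (x̂, p̂) strictly improves on (x*, p*) in the priced day-ahead problem. -/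
open Finset

/-- Feasibility for the priced day-ahead problem DA(C,W): the non-VRE decision `x`
together with the aggregate VRE dispatch lies in `Y`, and each segment dispatch
lies between `0` and the bid quantity `W k s`. -/
def DAFeasible {n : ℕ} {K S : Type*} [Fintype S]
    (Y : Set ((Fin n → ℝ) × (K → ℝ)))
    (W : K → S → ℝ) (x : Fin n → ℝ) (p : K → S → ℝ) : Prop :=
  ((x, fun k => ∑ s, p k s) ∈ Y) ∧ ∀ k s, 0 ≤ p k s ∧ p k s ≤ W k s

/-- Optimality for the priced day-ahead problem DA(C,W): feasible and minimizing
`f0 x + Σ_k Σ_s C k s * p k s` over all feasible pairs. -/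
def DAOptimal {n : ℕ} {K S : Type*} [Fintype K] [Fintype S]
    (Y : Set ((Fin n → ℝ) × (K → ℝ))) (f0 : (Fin n → ℝ) → ℝ)
    (C W : K → S → ℝ) (x : Fin n → ℝ) (p : K → S → ℝ) : Prop :=
  DAFeasible Y W x p ∧
    ∀ x' p', DAFeasible Y W x' p' →
      f0 x + ∑ k, ∑ s, C k s * p k s ≤ f0 x' + ∑ k, ∑ s, C k s * p' k s

/-- Feasibility for the quantity-only day-ahead problem DA0(W'). -/
def DA0Feasible {n : ℕ} {K : Type*}
    (Y : Set ((Fin n → ℝ) × (K → ℝ)))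
    (W' : K → ℝ) (x : Fin n → ℝ) (q : K → ℝ) : Prop :=
  ((x, q) ∈ Y) ∧ ∀ k, 0 ≤ q k ∧ q k ≤ W' k

/-- Optimality for the quantity-only day-ahead problem DA0(W'): feasible and
minimizing `f0 x` over all feasible pairs. -/
def DA0Optimal {n : ℕ} {K : Type*}
    (Y : Set ((Fin n → ℝ) × (K → ℝ))) (f0 : (Fin n → ℝ) → ℝ)
    (W' : K → ℝ) (x : Fin n → ℝ) (q : K → ℝ) : Prop :=
  DA0Feasible Y W' x q ∧ ∀ x' q', DA0Feasible Y W' x' q' → f0 x ≤ f0 x'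

/-! Scale each unit–hour's accepted bid segments `p* k ·` by the common factor
`q̂ k / Σ_s p* k s ∈ [0, 1]`. The result stays within the bids, aggregates to `q̂`, and
costs no more than `p*` because prices are nonnegative; the strict saving comes from `f0`. -/

section Rescale

variable {S 𝕜 : Type*} [Fintype S] [Field 𝕜] [LinearOrder 𝕜]

def rescaleToSum (p : S → 𝕜) (q : 𝕜) (s : S) : 𝕜 := q / (∑ t, p t) * p s

-- If `Σ p = 0` then `q = 0`, and `q / 0 = 0` makes the rescaled vector `0`, as it should be.
theorem sum_rescaleToSum {p : S → 𝕜} {q : 𝕜} (hq : 0 ≤ q) (hqp : q ≤ ∑ t, p t) :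
    ∑ s, rescaleToSum p q s = q := by
  rcases eq_or_ne (∑ t, p t) 0 with hzero | hne
  · simp [rescaleToSum, hzero, le_antisymm (hzero ▸ hqp) hq]
  · simp only [rescaleToSum]
    rw [← mul_sum, div_mul_cancel₀ _ hne]

theorem rescaleToSum_mem_Icc [IsStrictOrderedRing 𝕜] {p : S → 𝕜} {q : 𝕜} (hp : 0 ≤ p)
    (hq : 0 ≤ q) (hqp : q ≤ ∑ t, p t) (s : S) : rescaleToSum p q s ∈ Set.Icc 0 (p s) := by
  have hfactor : q / ∑ t, p t ≤ 1 := div_le_one_of_le₀ hqp (sum_nonneg fun t _ => hp t)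
  refine ⟨mul_nonneg (div_nonneg hq (hq.trans hqp)) (hp s), ?_⟩
  exact mul_le_of_le_one_left (hp s) hfactor

end Rescale

theorem strict_improvement_general {n : ℕ} {K S : Type*} [Fintype K] [Fintype S]
    (Y : Set ((Fin n → ℝ) × (K → ℝ))) (f0 : (Fin n → ℝ) → ℝ)
    (C W : K → S → ℝ) (hC : ∀ k s, 0 ≤ C k s)
    (xs : Fin n → ℝ) (ps : K → S → ℝ) (hfeas : DAFeasible Y W xs ps)
    (xh : Fin n → ℝ) (qh : K → ℝ)
    (hmem : (xh, qh) ∈ Y) (hqh : ∀ k, 0 ≤ qh k ∧ qh k ≤ ∑ s, ps k s)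
    (hlt : f0 xh < f0 xs) :
    ∃ ph : K → S → ℝ, DAFeasible Y W xh ph ∧
      f0 xh + ∑ k, ∑ s, C k s * ph k s < f0 xs + ∑ k, ∑ s, C k s * ps k s := by
  set ph : K → S → ℝ := fun k => rescaleToSum (ps k) (qh k)
  have hps : ∀ k, 0 ≤ ps k := fun k s => (hfeas.2 k s).1
  have hph : ∀ k s, ph k s ∈ Set.Icc 0 (ps k s) := fun k =>
    rescaleToSum_mem_Icc (hps k) (hqh k).1 (hqh k).2
  have hdispatch : (fun k => ∑ s, ph k s) = qh :=
    funext fun k => sum_rescaleToSum (hqh k).1 (hqh k).2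
  refine ⟨ph, ⟨hdispatch ▸ hmem, fun k s => ⟨(hph k s).1, (hph k s).2.trans (hfeas.2 k s).2⟩⟩,
    ?_⟩
  have hcost : ∑ k, ∑ s, C k s * ph k s ≤ ∑ k, ∑ s, C k s * ps k s := by
    gcongr with k _ s _
    exacts [hC k s, (hph k s).2]
  linarith

/-- Contradiction step in the proof of Theorem 1: if `(x*, p*)` is feasible for
DA(C,W) with nonnegative prices and quantities, and `(x̂, q̂) ∈ Y` has aggregate
dispatch within the aggregate of `p*` and strictly smaller true cost, then some
`(x̂, p̂)` is feasible for DA(C,W) and strictly improves the priced objective. -/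
theorem strict_improvement {n : ℕ} {K S : Type*} [Fintype K] [Fintype S] [Nonempty S]
    (Y : Set ((Fin n → ℝ) × (K → ℝ))) (f0 : (Fin n → ℝ) → ℝ)
    (C W : K → S → ℝ) (hC : ∀ k s, 0 ≤ C k s) (hW : ∀ k s, 0 ≤ W k s)
    (xs : Fin n → ℝ) (ps : K → S → ℝ) (hfeas : DAFeasible Y W xs ps)
    (xh : Fin n → ℝ) (qh : K → ℝ)
    (hmem : (xh, qh) ∈ Y) (hqh : ∀ k, 0 ≤ qh k ∧ qh k ≤ ∑ s, ps k s)
    (hlt : f0 xh < f0 xs) :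
    ∃ ph : K → S → ℝ, DAFeasible Y W xh ph ∧
      f0 xh + ∑ k, ∑ s, C k s * ph k s < f0 xs + ∑ k, ∑ s, C k s * ps k s :=
  strict_improvement_general Y f0 C W hC xs ps hfeas xh qh hmem hqh hlt
end

section
/- Let C : K → S → ℝ and W : K → S → ℝ satisfy C k s ≥ 0 and W k s ≥ 0 for all k, s, and let (x*, p*) be optimal for the priced day-ahead problem DA(C,W). Define the aggregate q* : K → ℝ by q* k := Σ_{s∈S} p* k s. Then (x*, q*) is optimal for the quantity-only problem DA0(q*), i.e., (x*, q*) is feasible for DA0(q*) and f0(x*) ≤ f0(x) for every (x, q) feasible for DA0(q*). -/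
open Finset

/-! Given `(x, q)` feasible for DA0(q*), scale each unit's segment dispatch `p* k ·` by the
factor `q k / q* k ∈ [0, 1]` (any factor when `q* k = 0`). The result is feasible for DA(C,W),
aggregates to `q`, and with nonnegative prices costs no more than `p*`; optimality of
`(x*, p*)` then gives `f0 x* ≤ f0 x`. -/

theorem exists_mem_Icc_mul_eq_of_le {𝕜 : Type*} [Field 𝕜] [LinearOrder 𝕜] [IsStrictOrderedRing 𝕜]
    {b c : 𝕜} (hb : 0 ≤ b) (hbc : b ≤ c) : ∃ t ∈ Set.Icc (0 : 𝕜) 1, t * c = b := by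
  rcases (hb.trans hbc).eq_or_lt with rfl | hc
  · exact ⟨0, ⟨le_rfl, zero_le_one⟩, by rw [zero_mul, le_antisymm hbc hb]⟩
  · exact ⟨b / c, ⟨div_nonneg hb hc.le, (div_le_one hc).2 hbc⟩, div_mul_cancel₀ b hc.ne'⟩

theorem sum_sum_mul_mul_le_of_le_one {K S : Type*} [Fintype K] [Fintype S] {C p : K → S → ℝ}
    {t : K → ℝ} (hC : ∀ k s, 0 ≤ C k s) (hp : ∀ k s, 0 ≤ p k s) (ht : ∀ k, t k ≤ 1) :
    ∑ k, ∑ s, C k s * (t k * p k s) ≤ ∑ k, ∑ s, C k s * p k s := by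
  gcongr with k _ s _
  · exact hC k s
  · exact mul_le_of_le_one_left (hp k s) (ht k)

namespace DAFeasible

variable {n : ℕ} {K S : Type*} [Fintype S] {Y : Set ((Fin n → ℝ) × (K → ℝ))} {W : K → S → ℝ}
  {x : Fin n → ℝ} {p : K → S → ℝ}

theorem nonneg (h : DAFeasible Y W x p) (k : K) (s : S) : 0 ≤ p k s := (h.2 k s).1

theorem da0Feasible_sum (h : DAFeasible Y W x p) :
    DA0Feasible Y (fun k => ∑ s, p k s) x (fun k => ∑ s, p k s) :=
  ⟨h.1, fun k => ⟨sum_nonneg fun s _ => h.nonneg k s, le_rfl⟩⟩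

theorem rescale (h : DAFeasible Y W x p) {t : K → ℝ} (ht : ∀ k, t k ∈ Set.Icc (0 : ℝ) 1)
    {x' : Fin n → ℝ} (hY : (x', fun k => t k * ∑ s, p k s) ∈ Y) :
    DAFeasible Y W x' (fun k s => t k * p k s) := by
  refine ⟨by simpa only [mul_sum] using hY, fun k s => ⟨?_, ?_⟩⟩
  · exact mul_nonneg (ht k).1 (h.nonneg k s)
  · exact (mul_le_of_le_one_left (h.nonneg k s) (ht k).2).trans (h.2 k s).2

end DAFeasible

theorem priced_optimal_is_quantity_optimal_general {n : ℕ} {K S : Type*}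
    [Fintype K] [Fintype S]
    (Y : Set ((Fin n → ℝ) × (K → ℝ))) (f0 : (Fin n → ℝ) → ℝ)
    (C W : K → S → ℝ) (hC : ∀ k s, 0 ≤ C k s)
    (xs : Fin n → ℝ) (ps : K → S → ℝ) (hopt : DAOptimal Y f0 C W xs ps) :
    DA0Optimal Y f0 (fun k => ∑ s, ps k s) xs (fun k => ∑ s, ps k s) := by
  obtain ⟨hfeas, hmin⟩ := hopt
  refine ⟨hfeas.da0Feasible_sum, fun x' q' ⟨hY', hq'⟩ => ?_⟩
  choose t ht htq using fun k => exists_mem_Icc_mul_eq_of_le (hq' k).1 (hq' k).2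
  have hp' : DAFeasible Y W x' (fun k s => t k * ps k s) :=
    hfeas.rescale ht (by simpa only [htq] using hY')
  have hcost := sum_sum_mul_mul_le_of_le_one hC hfeas.nonneg fun k => (ht k).2
  linarith [hmin x' _ hp']

/-- Key lemma in the proof of Theorem 1: the day-ahead schedule optimal under any
nonnegative multi-segment bidding curve remains optimal for the zero-price
single-quantity problem whose capacity equals its own aggregate VRE dispatch. -/
theorem priced_optimal_is_quantity_optimal {n : ℕ} {K S : Type*}
    [Fintype K] [Fintype S] [Nonempty S]
    (Y : Set ((Fin n → ℝ) × (K → ℝ))) (f0 : (Fin n → ℝ) → ℝ)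
    (C W : K → S → ℝ) (hC : ∀ k s, 0 ≤ C k s) (hW : ∀ k s, 0 ≤ W k s)
    (xs : Fin n → ℝ) (ps : K → S → ℝ) (hopt : DAOptimal Y f0 C W xs ps) :
    DA0Optimal Y f0 (fun k => ∑ s, ps k s) xs (fun k => ∑ s, ps k s) :=
  priced_optimal_is_quantity_optimal_general Y f0 C W hC xs ps hopt
end

section
/- A ⊆ B: for every value v ∈ A (i.e., v = G(x*, fun k => Σ_{s∈S} p* k s) for some prices C ≥ 0, quantities W ≥ 0, and (x*, p*) optimal for DA(C,W)), there exist W' : K → ℝ with W' ≥ 0 and a pair (x, q) optimal for DA0(W') such that v = G(x, q). In other words, every expected system cost achievable by Problem BiD (multi-segment nonnegative-price bidding) is also achievable by Problem BiD-q (single-quantity zero-price bidding). -/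
open Finset

/-! Bid in BiD-q exactly the VRE amounts cleared by an optimal BiD outcome. That outcome stays
feasible, and any quantity-only competitor below those amounts lifts, by scaling each unit's
segments proportionally, to a priced competitor paying no more for VRE because prices are
nonnegative; priced optimality then rules out a competitor with lower `f0`. -/

/-- The witness scales `p` by `r / ∑ i, p i`; when the total is `0`, so is `r`, and the junk
value `r / 0 = 0` still works. -/
theorem exists_le_sum_eq {ι 𝕜 : Type*} [Fintype ι] [Field 𝕜] [LinearOrder 𝕜]
    [IsStrictOrderedRing 𝕜] {p : ι → 𝕜} (hp : ∀ i, 0 ≤ p i) {r : 𝕜} (hr₀ : 0 ≤ r)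
    (hr : r ≤ ∑ i, p i) :
    ∃ p' : ι → 𝕜, (∀ i, 0 ≤ p' i ∧ p' i ≤ p i) ∧ ∑ i, p' i = r := by
  have htot : 0 ≤ ∑ i, p i := Finset.sum_nonneg fun i _ => hp i
  set t := r / ∑ i, p i
  have ht₀ : 0 ≤ t := div_nonneg hr₀ htot
  have ht₁ : t ≤ 1 := div_le_one_of_le₀ hr htot
  refine ⟨fun i => t * p i, fun i => ⟨mul_nonneg ht₀ (hp i), mul_le_of_le_one_left (hp i) ht₁⟩, ?_⟩
  rw [← Finset.mul_sum]
  rcases htot.eq_or_lt with h | h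
  · rw [← h] at hr ⊢
    simp [le_antisymm hr hr₀]
  · exact div_mul_cancel₀ r h.ne'

theorem DA0Feasible.exists_daFeasible {n : ℕ} {K S : Type*} [Fintype S]
    {Y : Set ((Fin n → ℝ) × (K → ℝ))} {W p : K → S → ℝ} {x : Fin n → ℝ} {q : K → ℝ}
    (hp : ∀ k s, 0 ≤ p k s ∧ p k s ≤ W k s) (hq : DA0Feasible Y (fun k => ∑ s, p k s) x q) :
    ∃ p', DAFeasible Y W x p' ∧ ∀ k s, p' k s ≤ p k s := by
  choose p' hp' hsum using fun k =>
    exists_le_sum_eq (fun s => (hp k s).1) (hq.2 k).1 (hq.2 k).2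
  have hq' : (fun k => ∑ s, p' k s) = q := funext hsum
  exact ⟨p', ⟨hq' ▸ hq.1, fun k s => ⟨(hp' k s).1, (hp' k s).2.trans (hp k s).2⟩⟩,
    fun k s => (hp' k s).2⟩

theorem DAOptimal.da0Optimal_sum {n : ℕ} {K S : Type*} [Fintype K] [Fintype S]
    {Y : Set ((Fin n → ℝ) × (K → ℝ))} {f0 : (Fin n → ℝ) → ℝ} {C W p : K → S → ℝ}
    {x : Fin n → ℝ} (hC : ∀ k s, 0 ≤ C k s) (h : DAOptimal Y f0 C W x p) :
    DA0Optimal Y f0 (fun k => ∑ s, p k s) x (fun k => ∑ s, p k s) := by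
  obtain ⟨⟨hmem, hp⟩, hmin⟩ := h
  refine ⟨⟨hmem, fun k => ⟨Finset.sum_nonneg fun s _ => (hp k s).1, le_rfl⟩⟩, ?_⟩
  intro x' q' hq'
  obtain ⟨p', hfeas, hle⟩ := hq'.exists_daFeasible hp
  have hcost : ∑ k, ∑ s, C k s * p' k s ≤ ∑ k, ∑ s, C k s * p k s := by
    gcongr with k _ s _
    · exact hC k s
    · exact hle k s
  linarith [hmin x' p' hfeas]

theorem BiD_subset_BiDq_general {n : ℕ} {K S : Type*} [Fintype K] [Fintype S]
    (Y : Set ((Fin n → ℝ) × (K → ℝ))) (f0 : (Fin n → ℝ) → ℝ)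
    (G : (Fin n → ℝ) × (K → ℝ) → ℝ) :
    {v : ℝ | ∃ (C W : K → S → ℝ) (x : Fin n → ℝ) (p : K → S → ℝ),
        (∀ k s, 0 ≤ C k s) ∧ (∀ k s, 0 ≤ W k s) ∧ DAOptimal Y f0 C W x p ∧
        v = G (x, fun k => ∑ s, p k s)} ⊆
    {v : ℝ | ∃ (W' : K → ℝ) (x : Fin n → ℝ) (q : K → ℝ),
        (∀ k, 0 ≤ W' k) ∧ DA0Optimal Y f0 W' x q ∧ v = G (x, q)} := by
  rintro v ⟨C, W, x, p, hC, -, hopt, rfl⟩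
  have hq := hopt.da0Optimal_sum hC
  exact ⟨_, x, _, fun k => (hq.1.2 k).1, hq, rfl⟩

/-- A ⊆ B: every expected system cost achievable by Problem BiD (multi-segment
nonnegative-price bidding) is also achievable by Problem BiD-q (single-quantity
zero-price bidding). -/
theorem BiD_subset_BiDq {n : ℕ} {K S : Type*} [Fintype K] [Fintype S] [Nonempty S]
    (Y : Set ((Fin n → ℝ) × (K → ℝ))) (f0 : (Fin n → ℝ) → ℝ)
    (G : (Fin n → ℝ) × (K → ℝ) → ℝ) :
    {v : ℝ | ∃ (C W : K → S → ℝ) (x : Fin n → ℝ) (p : K → S → ℝ),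
        (∀ k s, 0 ≤ C k s) ∧ (∀ k s, 0 ≤ W k s) ∧ DAOptimal Y f0 C W x p ∧
        v = G (x, fun k => ∑ s, p k s)} ⊆
    {v : ℝ | ∃ (W' : K → ℝ) (x : Fin n → ℝ) (q : K → ℝ),
        (∀ k, 0 ≤ W' k) ∧ DA0Optimal Y f0 W' x q ∧ v = G (x, q)} :=
  BiD_subset_BiDq_general Y f0 G
end
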